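/- Let G be a group, K ≤ G, n a positive integer with G = K·ζ_n(G). Then γ_{n+1}(G) ∩ ζ_n(G) = γ_{n+1}(K) ∩ ζ_n(K). -/

import Mathlib

/-!
Mathlib's `lowerCentralSeries i` is the paper's `γ_{i+1}`. By the three subgroups lemma,
`[γ_{i+1}, ζ_{i+j+1}] ≤ ζ_j`. Writing elements of `G` as `k z` with `k ∈ K`, `z ∈ ζ_n`, this
gives by induction `γ_{i+1}(G) ≤ γ_{i+1}(K) ζ_{n-i}(G)`, hence `γ_{n+1}(G) = γ_{n+1}(K)`.
Conversely, `γ_{n+1}(G)` centralises `ζ_n(G)`, so for `x ∈ γ_{n+1}(K)` we have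
`[x, k z] = [x, k]`, and induction on `i` shows `γ_{n+1}(K) ∩ ζ_i(K) ≤ ζ_i(G)`;
the inclusion `K ∩ ζ_i(G) ≤ ζ_i(K)` holds for every subgroup.
-/

open scoped commutatorElement

namespace Subgroup

variable {G : Type*} [Group G]

theorem commutator_commutator_le_of_rotate {H₁ H₂ H₃ N : Subgroup G} [N.Normal]
    (h1 : ⁅⁅H₂, H₃⁆, H₁⁆ ≤ N) (h2 : ⁅⁅H₃, H₁⁆, H₂⁆ ≤ N) : ⁅⁅H₁, H₂⁆, H₃⁆ ≤ N := by
  set π : G →* G ⧸ N := QuotientGroup.mk' N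
  have key (A B C : Subgroup G) : ⁅⁅A, B⁆, C⁆ ≤ N ↔ ⁅⁅A.map π, B.map π⁆, C.map π⁆ = ⊥ := by
    rw [← map_commutator, ← map_commutator, map_eq_bot_iff, QuotientGroup.ker_mk']
  rw [key] at h1 h2 ⊢
  exact commutator_commutator_eq_bot_of_rotate h1 h2

theorem commutator_lowerCentralSeries_upperCentralSeries_le (i j : ℕ) :
    ⁅(⊤ : Subgroup G).lowerCentralSeries i, upperCentralSeries G (i + 1 + j)⁆ ≤
      upperCentralSeries G j := by
  induction i generalizing j with
  | zero =>
    rw [lowerCentralSeries_zero, commutator_comm, zero_add, add_comm]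
    exact commutator_upperCentralSeries_top_le G j
  | succ i ih =>
    rw [lowerCentralSeries_succ]
    apply commutator_commutator_le_of_rotate
    · calc ⁅⁅⊤, upperCentralSeries G (i + 1 + 1 + j)⁆, (⊤ : Subgroup G).lowerCentralSeries i⁆
          ≤ ⁅upperCentralSeries G (i + 1 + j), (⊤ : Subgroup G).lowerCentralSeries i⁆ := by
            rw [commutator_comm ⊤, add_right_comm _ 1 j]
            exact commutator_mono (commutator_upperCentralSeries_top_le G _) le_rfl
        _ ≤ upperCentralSeries G j := by rw [commutator_comm]; exact ih j
    · calc ⁅⁅upperCentralSeries G (i + 1 + 1 + j), (⊤ : Subgroup G).lowerCentralSeries i⁆, ⊤⁆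
          ≤ ⁅upperCentralSeries G (j + 1), ⊤⁆ := by
            rw [commutator_comm (upperCentralSeries G _), add_assoc (i + 1), add_comm 1 j]
            exact commutator_mono (ih (j + 1)) le_rfl
        _ ≤ upperCentralSeries G j := commutator_upperCentralSeries_top_le G j

theorem commutator_lowerCentralSeries_upperCentralSeries_eq_bot (n : ℕ) :
    ⁅(⊤ : Subgroup G).lowerCentralSeries n, upperCentralSeries G n⁆ = ⊥ := by
  cases n with
  | zero => exact commutator_bot_right _
  | succ n =>
    refine le_bot_iff.mp ?_
    calc ⁅(⊤ : Subgroup G).lowerCentralSeries (n + 1), upperCentralSeries G (n + 1)⁆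
        ≤ ⁅(⊤ : Subgroup G).lowerCentralSeries n, upperCentralSeries G (n + 1 + 0)⁆ :=
          commutator_mono (lowerCentralSeries_antitone _ n.le_succ) le_rfl
      _ ≤ ⊥ := commutator_lowerCentralSeries_upperCentralSeries_le n 0

theorem comap_subtype_upperCentralSeries_le (K : Subgroup G) (i : ℕ) :
    (upperCentralSeries G i).comap K.subtype ≤ upperCentralSeries K i := by
  induction i with
  | zero => simp
  | succ i ih =>
    intro x hx
    exact mem_upperCentralSeries_succ_iff.mpr fun y ↦ ih (mem_upperCentralSeries_succ_iff.mp hx y)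

theorem lowerCentralSeries_le_sup_upperCentralSeries {K : Subgroup G} {i j : ℕ}
    (hK : K ⊔ upperCentralSeries G (i + j) = ⊤) :
    (⊤ : Subgroup G).lowerCentralSeries i ≤ K.lowerCentralSeries i ⊔ upperCentralSeries G j := by
  induction i generalizing j with
  | zero =>
    rw [zero_add] at hK
    rw [lowerCentralSeries_zero, lowerCentralSeries_zero, hK]
  | succ i ih =>
    rw [lowerCentralSeries_succ, commutator_le]
    intro a ha y _
    obtain ⟨k, hk, z, hz, rfl⟩ :=
      mem_sup_of_normal_right.mp (ih (by rwa [← add_assoc, add_right_comm]) ha)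
    obtain ⟨k', hk', z', hz', rfl⟩ := mem_sup_of_normal_right.mp (hK ▸ mem_top y)
    have hzy : k * ⁅z, k' * z'⁆ * k⁻¹ ∈ upperCentralSeries G j :=
      Normal.conj_mem inferInstance _
        (commutator_upperCentralSeries_top_le G j (commutator_mem_commutator hz (mem_top _))) k
    have hkk' : ⁅k, k'⁆ ∈ K.lowerCentralSeries (i + 1) := commutator_mem_commutator hk hk'
    have hkz' : k' * ⁅k, z'⁆ * k'⁻¹ ∈ upperCentralSeries G j :=
      Normal.conj_mem inferInstance _ (commutator_lowerCentralSeries_upperCentralSeries_le i j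
        (commutator_mem_commutator (lowerCentralSeries_mono i le_top hk) hz')) k'
    rw [commutatorElement_mul_left_eq_conj_mul k z, commutatorElement_mul_right_eq_mul_conj k k' z']
    simpa only [mul_assoc] using
      mul_mem (mul_mem (mem_sup_right hzy) (mem_sup_left hkk')) (mem_sup_right hkz')

theorem lowerCentralSeries_eq_of_sup_upperCentralSeries_eq_top {K : Subgroup G} {n : ℕ}
    (hK : K ⊔ upperCentralSeries G n = ⊤) :
    K.lowerCentralSeries n = (⊤ : Subgroup G).lowerCentralSeries n := by
  refine le_antisymm (lowerCentralSeries_mono n le_top) ?_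
  simpa using lowerCentralSeries_le_sup_upperCentralSeries (i := n) (j := 0) hK

theorem lowerCentralSeries_inf_upperCentralSeries_le_comap_subtype {K : Subgroup G} {n : ℕ}
    (hK : K ⊔ upperCentralSeries G n = ⊤) (i : ℕ) :
    (⊤ : Subgroup K).lowerCentralSeries n ⊓ upperCentralSeries K i ≤
      (upperCentralSeries G i).comap K.subtype := by
  induction i with
  | zero => simp
  | succ i ih =>
    rintro x ⟨hγ, hζ⟩
    refine mem_upperCentralSeries_succ_iff.mpr fun g ↦ ?_
    obtain ⟨k, hk, z, hz, rfl⟩ := mem_sup_of_normal_right.mp (hK ▸ mem_top g)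
    have hxz : Commute (x : G) z := by
      rw [← commutatorElement_eq_one_iff_commute, ← mem_bot,
        ← commutator_lowerCentralSeries_upperCentralSeries_eq_bot n]
      exact commutator_mem_commutator (lowerCentralSeries_mono n le_top
        (top_subtype_lowerCentralSeries K n ▸ mem_map_of_mem _ hγ)) hz
    have hxk : ⁅x, ⟨k, hk⟩⁆ ∈ (⊤ : Subgroup K).lowerCentralSeries n ⊓ upperCentralSeries K i :=
      ⟨lowerCentralSeries_antitone _ n.le_succ (commutator_mem_commutator hγ (mem_top _)),
        mem_upperCentralSeries_succ_iff.mp hζ _⟩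
    change ⁅(x : G), k * z⁆ ∈ _
    rw [commutatorElement_mul_right_eq_mul_conj, commutatorElement_eq_one_iff_commute.mpr hxz,
      mul_one, mul_inv_cancel_right]
    exact ih hxk

end Subgroup

theorem hekster_inf_general (G : Type*) [Group G] (K : Subgroup G) (n : ℕ)
    (hKZ : ∀ g : G, ∃ k ∈ K, ∃ z ∈ upperCentralSeries G n, g = k * z) :
    (⊤ : Subgroup G).lowerCentralSeries n ⊓ upperCentralSeries G n =
      Subgroup.map K.subtype ((⊤ : Subgroup K).lowerCentralSeries n ⊓ upperCentralSeries K n) := by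
  have hK : K ⊔ Subgroup.upperCentralSeries G n = ⊤ := eq_top_iff.mpr fun g _ ↦ by
    obtain ⟨k, hk, z, hz, rfl⟩ := hKZ g
    exact Subgroup.mul_mem_sup hk hz
  have hγ : ((⊤ : Subgroup K).lowerCentralSeries n).map K.subtype =
      (⊤ : Subgroup G).lowerCentralSeries n := by
    rw [Subgroup.top_subtype_lowerCentralSeries,
      Subgroup.lowerCentralSeries_eq_of_sup_upperCentralSeries_eq_top hK]
  apply le_antisymm
  · rintro _ ⟨hx, hζ⟩
    rw [← hγ] at hx
    obtain ⟨x, hx, rfl⟩ := hx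
    exact ⟨x, ⟨hx, Subgroup.comap_subtype_upperCentralSeries_le K n hζ⟩, rfl⟩
  · rintro _ ⟨x, hx, rfl⟩
    exact ⟨hγ ▸ Subgroup.mem_map_of_mem _ hx.1,
      Subgroup.lowerCentralSeries_inf_upperCentralSeries_le_comap_subtype hK n hx⟩

/-- **Hekster's lemma, part 3.** If `G = K·ζ_n(G)` then
`γ_{n+1}(G) ∩ ζ_n(G) = γ_{n+1}(K) ∩ ζ_n(K)`.
In Mathlib's indexing `γ_{n+1}` is `lowerCentralSeries · n`. -/
theorem hekster_inf (G : Type*) [Group G] (K : Subgroup G) (n : ℕ)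
    (hn : 0 < n)
    (hKZ : ∀ g : G, ∃ k ∈ K, ∃ z ∈ upperCentralSeries G n, g = k * z) :
    (⊤ : Subgroup G).lowerCentralSeries n ⊓ upperCentralSeries G n =
      Subgroup.map K.subtype ((⊤ : Subgroup K).lowerCentralSeries n ⊓ upperCentralSeries K n) :=
  hekster_inf_general G K n hKZ
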